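/- arXiv:2206.12308 — 2 statements merged into one kernel-verified Lean document; each statement's English description precedes it below -/
import Mathlib

section
/- Let (X,Φ) be a topological flow and let U be a subset of a closed cross-section S such that closure(U) ∩ ∂^Φ(S) = ∅. Then ∂^Φ(U) = ∂_S(U) and Int^Φ(U) = Int_S(U). -/
open Set Topology

/-- A topological flow. -/
structure IsFlow (X : Type*) [TopologicalSpace X] (φ : ℝ → X → X) : Prop where
  cont : Continuous fun p : X × ℝ => φ p.2 p.1
  map_zero : ∀ x : X, φ 0 x = x
  map_add : ∀ s t : ℝ, ∀ x : X, φ (s + t) x = φ s (φ t x)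

variable {X : Type*}

/-- `Φ_L(A) = {Φ_t(x) : t ∈ L, x ∈ A}`. -/
def flowSet (φ : ℝ → X → X) (L : Set ℝ) (A : Set X) : Set X :=
  {y | ∃ t ∈ L, ∃ x ∈ A, φ t x = y}

/-- A cross-section of injectivity time `η > 0`. -/
def IsCrossSection (φ : ℝ → X → X) (η : ℝ) (S : Set X) : Prop :=
  0 < η ∧ Set.InjOn (fun p : X × ℝ => φ p.2 p.1) (S ×ˢ Set.Icc (-η) η)

/-- The flow interior (taking `γ = η/2`). -/
def flowInterior [TopologicalSpace X] (φ : ℝ → X → X) (η : ℝ) (U : Set X) : Set X :=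
  interior (flowSet φ (Set.Icc (-(η / 2)) (η / 2)) U) ∩ U

/-- The flow boundary. -/
def flowBoundary [TopologicalSpace X] (φ : ℝ → X → X) (η : ℝ) (U : Set X) : Set X :=
  closure U \ flowInterior φ η U

/-- `∂_S U`: the boundary of `U` in the subspace topology of `S`, as a subset of `X`. -/
def relBoundary [TopologicalSpace X] (S U : Set X) : Set X :=
  (fun y : S => (y : X)) '' frontier {y : S | (y : X) ∈ U}

/-- `Int_S U`: the interior of `U` in the subspace topology of `S`, as a subset of `X`. -/
def relInterior [TopologicalSpace X] (S U : Set X) : Set X :=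
  (fun y : S => (y : X)) '' interior {y : S | (y : X) ∈ U}

/-!
Injectivity of the flow on `S × [-η, η]` gives `Φ_γ(U) ∩ S = U`, so `Int^Φ(U) ⊆ Int_S(U)`.
Conversely, near a point of `Int^Φ(S)` the compactness of `S × [-γ, γ]` thickens a relatively open
piece of `U` to an open subset of `Φ_γ(U)`. The boundary statement follows by removing the
interiors from `closure U`.
-/

section CrossSection

variable {φ : ℝ → X → X} {η : ℝ} {S : Set X}

theorem IsCrossSection.eq_of_apply_eq (hφ₀ : ∀ x, φ 0 x = x) (hcs : IsCrossSection φ η S)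
    {x y : X} (hx : x ∈ S) (hy : y ∈ S) {t : ℝ} (ht : t ∈ Icc (-η) η) (hxy : φ t x = y) :
    x = y := by
  have hpair : ((x, t) : X × ℝ) = (y, 0) :=
    hcs.2 (mk_mem_prod hx ht) (mk_mem_prod hy ⟨by linarith [hcs.1], hcs.1.le⟩)
      (by simp only [hxy, hφ₀])
  exact congrArg Prod.fst hpair

theorem IsCrossSection.flowSet_inter_subset (hφ₀ : ∀ x, φ 0 x = x)
    (hcs : IsCrossSection φ η S) {L : Set ℝ} (hL : L ⊆ Icc (-η) η) {A : Set X} (hAS : A ⊆ S) :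
    flowSet φ L A ∩ S ⊆ A := by
  rintro y ⟨⟨t, ht, x, hx, rfl⟩, hy⟩
  rwa [← hcs.eq_of_apply_eq hφ₀ (hAS hx) hy (hL ht) rfl]

theorem Icc_half_subset_Icc (hη : 0 < η) : Icc (-(η / 2)) (η / 2) ⊆ Icc (-η) η :=
  Icc_subset_Icc (by linarith) (by linarith)

end CrossSection

section RelativeTopology

variable [TopologicalSpace X] {S U : Set X}

theorem relInterior_subset : relInterior S U ⊆ U := by
  rintro _ ⟨y, hy, rfl⟩
  exact interior_subset (s := {y : S | (y : X) ∈ U}) hy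

theorem mem_relInterior_iff {y : X} :
    y ∈ relInterior S U ↔ y ∈ S ∧ ∃ V, IsOpen V ∧ y ∈ V ∧ V ∩ S ⊆ U := by
  constructor
  · rintro ⟨y, hy, rfl⟩
    obtain ⟨W, hWU, hWo, hyW⟩ := mem_interior.1 hy
    obtain ⟨V, hV, rfl⟩ := isOpen_induced_iff.1 hWo
    exact ⟨y.2, V, hV, hyW, fun x hx => hWU (show (⟨x, hx.2⟩ : S) ∈ (↑) ⁻¹' V from hx.1)⟩
  · rintro ⟨hyS, V, hV, hyV, hVU⟩
    exact ⟨⟨y, hyS⟩, mem_interior.2 ⟨((↑) : S → X) ⁻¹' V, fun x hx => hVU ⟨hx, x.2⟩,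
      hV.preimage continuous_subtype_val, hyV⟩, rfl⟩

theorem relBoundary_eq_closure_diff_relInterior (hS : IsClosed S) (hUS : U ⊆ S) :
    relBoundary S U = closure U \ relInterior S U := by
  have hcl : ((↑) : S → X) '' closure {y : S | (y : X) ∈ U} = closure U := by
    rw [← hS.isClosedEmbedding_subtypeVal.closure_image_eq]
    exact congrArg closure (Subtype.image_preimage_coe S U |>.trans (inter_eq_right.2 hUS))
  rw [relBoundary, relInterior, frontier, image_sdiff Subtype.val_injective, hcl]

end RelativeTopology

variable [TopologicalSpace X] {φ : ℝ → X → X} {η : ℝ} {S U : Set X}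

theorem flowInterior_subset_relInterior (hφ : IsFlow X φ) (hcs : IsCrossSection φ η S)
    (hUS : U ⊆ S) : flowInterior φ η U ⊆ relInterior S U := by
  rintro y ⟨hyint, hyU⟩
  refine mem_relInterior_iff.2 ⟨hUS hyU, _, isOpen_interior, hyint, ?_⟩
  exact (inter_subset_inter_left S interior_subset).trans
    (hcs.flowSet_inter_subset hφ.map_zero (Icc_half_subset_Icc hcs.1) hUS)

/-- `(x, t) ↦ φ t x` maps the compact set `S × L` injectively, so the points of `Φ_L(S)` not in
`Φ_L(U)` lie in the compact image of `(S \ V) × L`, which misses `y` because `y ∈ V`. -/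
theorem mem_interior_flowSet_of_mem_relInterior [T2Space X] (hφ : IsFlow X φ)
    (hSc : IsCompact S) (hcs : IsCrossSection φ η S) {L : Set ℝ} (hLc : IsCompact L)
    (hL : L ⊆ Icc (-η) η) {y : X} (hyU : y ∈ relInterior S U)
    (hyS : y ∈ interior (flowSet φ L S)) : y ∈ interior (flowSet φ L U) := by
  obtain ⟨hyS', V, hV, hyV, hVU⟩ := mem_relInterior_iff.1 hyU
  set K := (fun p : X × ℝ => φ p.2 p.1) '' (S ×ˢ L \ V ×ˢ univ)
  have hK : IsClosed K :=
    (((hSc.prod hLc).diff (hV.prod isOpen_univ)).image hφ.cont).isClosed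
  have hyK : y ∉ K := by
    rintro ⟨⟨x, t⟩, ⟨⟨hx, ht⟩, hxV⟩, hxy⟩
    dsimp only at hx ht hxy
    rw [hcs.eq_of_apply_eq hφ.map_zero hx hyS' (hL ht) hxy] at hxV
    exact hxV ⟨hyV, trivial⟩
  refine mem_interior.2 ⟨interior (flowSet φ L S) \ K, ?_,
    isOpen_interior.sdiff hK, hyS, hyK⟩
  rintro z ⟨hz, hzK⟩
  obtain ⟨t, ht, x, hx, rfl⟩ := interior_subset hz
  by_cases hxV : x ∈ V
  · exact ⟨t, ht, x, hVU ⟨hxV, hx⟩, rfl⟩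
  · exact absurd ⟨(x, t), ⟨⟨hx, ht⟩, fun h => hxV h.1⟩, rfl⟩ hzK

/-- If `U ⊆ S` with `closure U ∩ ∂^Φ(S) = ∅`, then `∂^Φ(U) = ∂_S(U)` and
`Int^Φ(U) = Int_S(U)`. -/
theorem flowBoundary_eq_relBoundary
    {X : Type*} [MetricSpace X] [CompactSpace X]
    (φ : ℝ → X → X) (hφ : IsFlow X φ)
    (η : ℝ) (S : Set X) (hS : IsClosed S) (hcs : IsCrossSection φ η S)
    (U : Set X) (hUS : U ⊆ S)
    (h : closure U ∩ flowBoundary φ η S = ∅) :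
    flowBoundary φ η U = relBoundary S U ∧ flowInterior φ η U = relInterior S U := by
  have hint : flowInterior φ η U = relInterior S U := by
    refine (flowInterior_subset_relInterior hφ hcs hUS).antisymm fun y hy => ?_
    have hyU : y ∈ U := relInterior_subset hy
    have hyS : y ∈ flowInterior φ η S := by
      by_contra hyS
      exact h.subset ⟨subset_closure hyU, subset_closure (hUS hyU), hyS⟩
    exact ⟨mem_interior_flowSet_of_mem_relInterior hφ hS.isCompact hcs isCompact_Icc
      (Icc_half_subset_Icc hcs.1) hy hyS.1, hyU⟩
  refine ⟨?_, hint⟩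
  rw [relBoundary_eq_closure_diff_relInterior hS hUS, ← hint, flowBoundary]
end

section
/- For every x ∈ D_{i,j} there exists an open neighborhood V of x in S_i' with closure(V) ⊂ Int^Φ(S_i') such that: t'_{i,j} is continuous on V; t'_{i,j}(y) ≤ 2η for all y ∈ V; T'_{i,j}|_V : V → S_j' is an open map; and T'_{i,j}|_V : V → T'_{i,j}(V) is a homeomorphism. -/
/-!
Two visits of an orbit to a cross-section of injectivity time `η` at times at most `2η` apart
coincide. Hence, near `x`, the first return time to `Sⱼ'` is the unique time in a window of
length `η` around `t₀ = t_{i,j}(x)` at which the orbit meets `Sⱼ'`, and a unique hitting time of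
a closed set in a compact window depends continuously on the point. Running the same
construction backwards, from `Sⱼ'` to `Sᵢ'`, gives a continuous left inverse of the hitting map
on an open set, which makes the hitting map open onto its image in `Sⱼ'`.
-/

open Set Topology

variable {X : Type*}

/-- First positive hitting time of a set `T`: `sInf {t > 0 : Φ_t(x) ∈ T}` (the paper's
`t'_{i,j}` when `T = S_j'`). -/
noncomputable def hitT (φ : ℝ → X → X) (T : Set X) (x : X) : ℝ :=
  sInf {t : ℝ | 0 < t ∧ φ t x ∈ T}

/-- The hitting map `T'_{i,j}(x) = Φ_{t'_{i,j}(x)}(x)`. -/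
noncomputable def hitMap (φ : ℝ → X → X) (T : Set X) (x : X) : X :=
  φ (hitT φ T x) x

/-- `D_{i,j}`: the points of `Sᵢ` whose first positive hitting time of `Sⱼ` exists (as a
minimum) and is at most `η`. -/
def Dij (φ : ℝ → X → X) (Si Sj : Set X) (η : ℝ) : Set X :=
  {x ∈ Si | ∃ t : ℝ, 0 < t ∧ t ≤ η ∧ φ t x ∈ Sj ∧
    ∀ s : ℝ, 0 < s → φ s x ∈ Sj → t ≤ s}

open Filter

namespace IsFlow

variable [TopologicalSpace X] {φ : ℝ → X → X}

lemma continuous_orbit (hφ : IsFlow X φ) (y : X) : Continuous fun t : ℝ => φ t y :=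
  hφ.cont.comp (continuous_const.prodMk continuous_id)

lemma continuous_map (hφ : IsFlow X φ) (t : ℝ) : Continuous (φ t) :=
  hφ.cont.comp (continuous_id.prodMk continuous_const)

lemma continuousOn_map_of_continuousOn (hφ : IsFlow X φ) {s : X → ℝ} {U : Set X}
    (hs : ContinuousOn s U) : ContinuousOn (fun y => φ (s y) y) U :=
  hφ.cont.comp_continuousOn (continuousOn_id.prodMk hs)

lemma map_neg_map (hφ : IsFlow X φ) (t : ℝ) (x : X) : φ (-t) (φ t x) = x := by
  rw [← hφ.map_add, neg_add_cancel, hφ.map_zero]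

lemma exists_mem_Icc_map_mem_of_map_mem_flowSet (hφ : IsFlow X φ) {γ a : ℝ} {T : Set X}
    {y : X} (h : φ a y ∈ flowSet φ (Icc (-γ) γ) T) :
    ∃ t ∈ Icc (a - γ) (a + γ), φ t y ∈ T := by
  obtain ⟨u, ⟨hu₁, hu₂⟩, w, hw, hwy⟩ := h
  refine ⟨a - u, ⟨by linarith, by linarith⟩, ?_⟩
  rwa [sub_eq_neg_add, hφ.map_add, ← hwy, hφ.map_neg_map]

end IsFlow

namespace IsCrossSection

variable [TopologicalSpace X] {φ : ℝ → X → X} {η : ℝ} {T : Set X}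

lemma eq_of_map_mem_of_abs_sub_le (hcs : IsCrossSection φ η T) (hφ : IsFlow X φ) {z : X} {t₁ t₂ : ℝ}
    (h₁ : φ t₁ z ∈ T) (h₂ : φ t₂ z ∈ T) (h : |t₁ - t₂| ≤ 2 * η) : t₁ = t₂ := by
  obtain ⟨hle, hge⟩ := abs_le.mp h
  -- both hits flow to the midpoint `φ ((t₁ + t₂) / 2) z` within time `η`
  have hmid : φ ((t₂ - t₁) / 2) (φ t₁ z) = φ (-((t₂ - t₁) / 2)) (φ t₂ z) := by
    rw [← hφ.map_add, ← hφ.map_add]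
    congr 1
    ring
  have hpair := hcs.2 (mk_mem_prod h₁ (by constructor <;> linarith))
    (mk_mem_prod h₂ (by constructor <;> linarith)) hmid
  have hm := congrArg Prod.snd hpair
  simp only at hm
  linarith

lemma eq_of_map_eq (hcs : IsCrossSection φ η T) (hφ : IsFlow X φ) {y₁ y₂ : X} (h₁ : y₁ ∈ T)
    (h₂ : y₂ ∈ T) {t : ℝ} (ht : |t| ≤ η) (h : φ t y₁ = y₂) : y₁ = y₂ := by
  have hpair := hcs.2 (⟨h₁, abs_le.mp ht⟩ : (y₁, t) ∈ T ×ˢ Icc (-η) η)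
    (⟨h₂, by constructor <;> linarith [hcs.1]⟩ : (y₂, (0 : ℝ)) ∈ T ×ˢ Icc (-η) η)
    (by simp only [h, hφ.map_zero])
  exact congrArg Prod.fst hpair

lemma injOn_map_of_abs_sub_le (hcs : IsCrossSection φ η T) (hφ : IsFlow X φ) {s : X → ℝ} {V : Set X}
    (hV : V ⊆ T) (hs : ∀ y₁ ∈ V, ∀ y₂ ∈ V, |s y₁ - s y₂| ≤ η) :
    InjOn (fun y => φ (s y) y) V := by
  intro y₁ hy₁ y₂ hy₂ h
  refine hcs.eq_of_map_eq hφ (hV hy₁) (hV hy₂) (hs y₁ hy₁ y₂ hy₂) ?_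
  calc φ (s y₁ - s y₂) y₁ = φ (-s y₂) (φ (s y₂) y₂) := by
        rw [sub_eq_neg_add, hφ.map_add]
        exact congrArg _ h
    _ = y₂ := hφ.map_neg_map _ _

lemma hitT_eq (hcs : IsCrossSection φ η T) (hφ : IsFlow X φ) {y : X} {s : ℝ} (hs : 0 < s)
    (hs' : s ≤ 2 * η) (hy : φ s y ∈ T) : hitT φ T y = s := by
  refine IsLeast.csInf_eq ⟨⟨hs, hy⟩, fun t ⟨ht, htT⟩ => le_of_not_gt fun hts => ?_⟩
  have := hcs.eq_of_map_mem_of_abs_sub_le hφ htT hy (by rw [abs_of_neg (by linarith)]; linarith)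
  linarith

end IsCrossSection

lemma exists_relOpen_closure_subset_of_mem_nhds [TopologicalSpace X] [RegularSpace X]
    {S Ω : Set X} {x : X} (hS : IsClosed S) (hx : x ∈ S) (hΩ : Ω ∈ 𝓝 x) :
    ∃ V : Set X, x ∈ V ∧ V ⊆ S ∧ IsOpen {y : S | (y : X) ∈ V} ∧ closure V ⊆ Ω ∩ S := by
  obtain ⟨N, hN, hNcl, hNΩ⟩ := exists_mem_nhds_isClosed_subset hΩ
  refine ⟨interior N ∩ S, ⟨mem_interior_iff_mem_nhds.mpr hN, hx⟩, inter_subset_right, ?_, ?_⟩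
  · convert (isOpen_interior (s := N)).preimage (continuous_subtype_val (p := (· ∈ S)))
      using 1
    ext y
    simp
  · calc closure (interior N ∩ S) ⊆ closure (N ∩ S) :=
          closure_mono (inter_subset_inter_left _ interior_subset)
      _ = N ∩ S := (hNcl.inter hS).closure_eq
      _ ⊆ Ω ∩ S := inter_subset_inter_left _ hNΩ

lemma isOpen_image_of_leftInvOn {Y : Type*} [TopologicalSpace X] [TopologicalSpace Y]
    {S A : Set X} {T U : Set Y} {f : X → Y} {g : Y → X} (hU : IsOpen U) (hg : ContinuousOn g U)
    (hgS : MapsTo g U S) (hAS : A ⊆ S) (hA : IsOpen {y : S | (y : X) ∈ A})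
    (hfU : MapsTo f A U) (hgf : LeftInvOn g f A) (hfg : ∀ z ∈ U ∩ T, g z ∈ A → f (g z) = z) :
    IsOpen {z : T | (z : Y) ∈ f '' A} := by
  obtain ⟨O, hO, hOA⟩ := isOpen_induced_iff.mp hA
  have hAO : ∀ y ∈ S, y ∈ A ↔ y ∈ O := fun y hy => by
    simpa using (Set.ext_iff.mp hOA ⟨y, hy⟩).symm
  convert (hg.isOpen_inter_preimage hU hO).preimage (continuous_subtype_val (p := (· ∈ T)))
    using 1
  ext ⟨z, hz⟩
  constructor
  · rintro ⟨y, hy, rfl⟩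
    exact ⟨hfU hy, by simpa [hgf hy] using (hAO y (hAS hy)).mp hy⟩
  · rintro ⟨hzU, hzO⟩
    have hgA : g z ∈ A := (hAO _ (hgS hzU)).mpr hzO
    exact ⟨g z, hgA, hfg z ⟨hzU, hz⟩ hgA⟩

noncomputable def windowHitTime (φ : ℝ → X → X) (T : Set X) (l r : ℝ) (y : X) : ℝ :=
  sInf {t ∈ Icc l r | φ t y ∈ T}

section windowHitTime

variable [TopologicalSpace X] {φ : ℝ → X → X} {η l r : ℝ} {T : Set X}

lemma windowHitTime_mem (hφ : IsFlow X φ) (hT : IsClosed T) {y : X}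
    (hex : ∃ t ∈ Icc l r, φ t y ∈ T) :
    windowHitTime φ T l r y ∈ Icc l r ∧ φ (windowHitTime φ T l r y) y ∈ T :=
  (isCompact_Icc.of_isClosed_subset (isClosed_Icc.inter (hT.preimage (hφ.continuous_orbit y)))
    inter_subset_left).sInf_mem hex

lemma IsCrossSection.windowHitTime_eq (hcs : IsCrossSection φ η T) (hφ : IsFlow X φ)
    (hT : IsClosed T) (hlr : r - l ≤ 2 * η) {y : X} {t : ℝ} (ht : t ∈ Icc l r)
    (hy : φ t y ∈ T) : windowHitTime φ T l r y = t := by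
  obtain ⟨⟨hl, hr⟩, hhit⟩ := windowHitTime_mem hφ hT ⟨t, ht, hy⟩
  exact hcs.eq_of_map_mem_of_abs_sub_le hφ hhit hy
    (abs_le.mpr ⟨by linarith [ht.2], by linarith [ht.1]⟩)

lemma IsCrossSection.map_windowHitTime_map (hcs : IsCrossSection φ η T) (hφ : IsFlow X φ)
    (hT : IsClosed T) (hlr : r - l ≤ 2 * η) {y : X} (hy : y ∈ T) {τ : ℝ} (hτ : -τ ∈ Icc l r) :
    φ (windowHitTime φ T l r (φ τ y)) (φ τ y) = y := by
  rw [hcs.windowHitTime_eq hφ hT hlr hτ (by rwa [hφ.map_neg_map]), hφ.map_neg_map]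

lemma IsCrossSection.continuousOn_windowHitTime (hcs : IsCrossSection φ η T)
    (hφ : IsFlow X φ) (hT : IsClosed T) (hlr : r - l ≤ 2 * η) {U : Set X} (hU : IsOpen U)
    (hex : ∀ y ∈ U, ∃ t ∈ Icc l r, φ t y ∈ T) : ContinuousOn (windowHitTime φ T l r) U := by
  refine (hU.continuousOn_iff).mpr fun y hy => tendsto_nhds.mpr fun I hI hyI => ?_
  -- the points with a hit outside `I` are the projection of a closed set along the compact
  -- window, hence form a closed set
  set K : Set (X × Icc l r) := {p | φ p.2 p.1 ∈ T ∧ (p.2 : ℝ) ∉ I}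
  have htime : Continuous fun p : X × Icc l r => (p.2 : ℝ) := by fun_prop
  have hK : IsClosed K :=
    (hT.preimage (hφ.cont.comp (continuous_fst.prodMk htime))).inter
      (hI.isClosed_compl.preimage htime)
  have hyK : y ∉ Prod.fst '' K := by
    rintro ⟨⟨z, t⟩, ⟨htT, htI⟩, rfl⟩
    exact htI (hcs.windowHitTime_eq hφ hT hlr t.2 htT ▸ hyI)
  filter_upwards [(isClosedMap_fst_of_compactSpace _ hK).isOpen_compl.mem_nhds hyK,
    hU.mem_nhds hy] with z hzK hzU
  obtain ⟨hmem, hhit⟩ := windowHitTime_mem hφ hT (hex z hzU)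
  by_contra hzI
  exact hzK ⟨(z, ⟨_, hmem⟩), ⟨hhit, hzI⟩, rfl⟩

lemma windowHitTime_mem_of_map_mem_interior (hφ : IsFlow X φ) (hT : IsClosed T) {a : ℝ} {y : X}
    (hy : φ a y ∈ interior (flowSet φ (Icc (-(η / 2)) (η / 2)) T)) :
    windowHitTime φ T (a - η / 2) (a + η / 2) y ∈ Icc (a - η / 2) (a + η / 2) ∧
      φ (windowHitTime φ T (a - η / 2) (a + η / 2) y) y ∈ T :=
  windowHitTime_mem hφ hT (hφ.exists_mem_Icc_map_mem_of_map_mem_flowSet (interior_subset hy))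

lemma IsCrossSection.continuousOn_windowHitTime_preimage_interior
    (hcs : IsCrossSection φ η T) (hφ : IsFlow X φ) (hT : IsClosed T) (a : ℝ) :
    ContinuousOn (windowHitTime φ T (a - η / 2) (a + η / 2))
      (φ a ⁻¹' interior (flowSet φ (Icc (-(η / 2)) (η / 2)) T)) :=
  hcs.continuousOn_windowHitTime hφ hT (by linarith [hcs.1]) (isOpen_interior.preimage
    (hφ.continuous_map a)) fun _ hy =>
      hφ.exists_mem_Icc_map_mem_of_map_mem_flowSet (interior_subset hy)

lemma IsCrossSection.hitT_eq_windowHitTime (hcs : IsCrossSection φ η T) (hφ : IsFlow X φ)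
    (hT : IsClosed T) {t₀ : ℝ} (ht₀ : t₀ ≤ η) {y : X}
    (hy : φ t₀ y ∈ interior (flowSet φ (Icc (-(η / 2)) (η / 2)) T))
    (hpos : 0 < windowHitTime φ T (t₀ - η / 2) (t₀ + η / 2) y) :
    hitT φ T y = windowHitTime φ T (t₀ - η / 2) (t₀ + η / 2) y := by
  obtain ⟨⟨-, hle⟩, hhit⟩ := windowHitTime_mem_of_map_mem_interior hφ hT hy
  exact hcs.hitT_eq hφ hpos (by linarith [hcs.1]) hhit

lemma IsCrossSection.eventually_windowHitTime_pos_and_map_mem (hcs : IsCrossSection φ η T)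
    (hφ : IsFlow X φ) (hT : IsClosed T) {t₀ : ℝ} (ht₀ : 0 < t₀) {x : X}
    (hx : φ t₀ x ∈ interior (flowSet φ (Icc (-(η / 2)) (η / 2)) T)) (hxT : φ t₀ x ∈ T)
    {W : Set X} (hW : IsOpen W) (hxW : x ∈ W) :
    ∀ᶠ y in 𝓝 x, φ t₀ y ∈ interior (flowSet φ (Icc (-(η / 2)) (η / 2)) T) ∧
      0 < windowHitTime φ T (t₀ - η / 2) (t₀ + η / 2) y ∧
      φ (-t₀) (φ (windowHitTime φ T (t₀ - η / 2) (t₀ + η / 2) y) y) ∈ W := by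
  have hη := hcs.1
  have hU := (isOpen_interior.preimage (hφ.continuous_map t₀)).mem_nhds hx
  have hs := hcs.continuousOn_windowHitTime_preimage_interior hφ hT t₀
  have hsx : windowHitTime φ T (t₀ - η / 2) (t₀ + η / 2) x = t₀ :=
    hcs.windowHitTime_eq hφ hT (by linarith) ⟨by linarith, by linarith⟩ hxT
  have hF := (hφ.continuous_map (-t₀)).continuousAt.comp
    ((hφ.continuousOn_map_of_continuousOn hs).continuousAt hU)
  filter_upwards [hU, (hs.continuousAt hU).eventually (lt_mem_nhds (hsx ▸ ht₀)),
    hF.preimage_mem_nhds (hW.mem_nhds (by simpa [hsx, hφ.map_neg_map] using hxW))]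
    with y h₁ h₂ h₃ using ⟨h₁, h₂, h₃⟩

lemma IsCrossSection.isOpen_image_map_windowHitTime {S : Set X} (hcsS : IsCrossSection φ η S)
    (hcsT : IsCrossSection φ η T) (hφ : IsFlow X φ) (hS : IsClosed S) (hT : IsClosed T)
    {t₀ : ℝ} {A : Set X} (hAS : A ⊆ S) (hA : IsOpen {y : S | (y : X) ∈ A})
    (hAT : ∀ y ∈ A, φ t₀ y ∈ interior (flowSet φ (Icc (-(η / 2)) (η / 2)) T))
    (hAS' : ∀ y ∈ A, φ (-t₀) (φ (windowHitTime φ T (t₀ - η / 2) (t₀ + η / 2) y) y) ∈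
      interior (flowSet φ (Icc (-(η / 2)) (η / 2)) S)) :
    IsOpen {z : T | (z : X) ∈
      (fun y => φ (windowHitTime φ T (t₀ - η / 2) (t₀ + η / 2) y) y) '' A} := by
  -- the left inverse is the return map to `S` along the window around `-t₀`
  refine isOpen_image_of_leftInvOn
    (g := fun z => φ (windowHitTime φ S (-t₀ - η / 2) (-t₀ + η / 2) z) z)
    (isOpen_interior.preimage (hφ.continuous_map (-t₀)))
    (hφ.continuousOn_map_of_continuousOn
      (hcsS.continuousOn_windowHitTime_preimage_interior hφ hS (-t₀)))
    (fun z hz => (windowHitTime_mem_of_map_mem_interior hφ hS hz).2) hAS hA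
    hAS' (fun y hy => ?_) fun z hz _ => ?_
  · obtain ⟨h₁, h₂⟩ := (windowHitTime_mem_of_map_mem_interior hφ hT (hAT y hy)).1
    exact hcsS.map_windowHitTime_map hφ hS (by linarith) (hAS hy)
      ⟨by linarith, by linarith⟩
  · obtain ⟨h₁, h₂⟩ := (windowHitTime_mem_of_map_mem_interior hφ hS hz.1).1
    exact hcsT.map_windowHitTime_map hφ hT (by linarith) hz.2 ⟨by linarith, by linarith⟩

end windowHitTime

theorem exists_nbhd_hitMap_homeo_general
    {X : Type*} [MetricSpace X]
    (φ : ℝ → X → X) (hφ : IsFlow X φ) (η : ℝ)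
    (Si Sj Si' Sj' : Set X)
    (hSi' : IsClosed Si') (hSj' : IsClosed Sj')
    (hcsi' : IsCrossSection φ η Si') (hcsj' : IsCrossSection φ η Sj')
    (hii' : Si ⊆ flowInterior φ η Si') (hjj' : Sj ⊆ flowInterior φ η Sj') :
    ∀ x ∈ Dij φ Si Sj η,
      ∃ V : Set X, x ∈ V ∧ V ⊆ Si' ∧
        IsOpen {y : Si' | (y : X) ∈ V} ∧
        closure V ⊆ flowInterior φ η Si' ∧
        ContinuousOn (hitT φ Sj') V ∧
        (∀ y ∈ V, 0 < hitT φ Sj' y ∧ hitT φ Sj' y ≤ 2 * η ∧ hitMap φ Sj' y ∈ Sj') ∧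
        (∀ A : Set X, A ⊆ V → IsOpen {y : Si' | (y : X) ∈ A} →
          IsOpen {y : Sj' | (y : X) ∈ hitMap φ Sj' '' A}) ∧
        Set.InjOn (hitMap φ Sj') V ∧ ContinuousOn (hitMap φ Sj') V := by
  rintro x ⟨hxSi, t₀, ht₀, ht₀η, hxSj, -⟩
  obtain ⟨hxWi, hxSi'⟩ := hii' hxSi
  obtain ⟨hxU, hxSj'⟩ := hjj' hxSj
  set s := windowHitTime φ Sj' (t₀ - η / 2) (t₀ + η / 2)
  obtain ⟨V, hxV, hVS, hVopen, hVcl⟩ := exists_relOpen_closure_subset_of_mem_nhds hSi' hxSi'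
    ((hcsj'.eventually_windowHitTime_pos_and_map_mem hφ hSj' ht₀ hxU hxSj' isOpen_interior
      hxWi).and (isOpen_interior.mem_nhds hxWi))
  have hVgood := fun y (hy : y ∈ V) => (hVcl (subset_closure hy)).1.1
  have hsV : ∀ y ∈ V, s y ∈ Icc (t₀ - η / 2) (t₀ + η / 2) ∧ φ (s y) y ∈ Sj' :=
    fun y hy => windowHitTime_mem_of_map_mem_interior hφ hSj' (hVgood y hy).1
  have hhitT : EqOn (hitT φ Sj') s V := fun y hy =>
    hcsj'.hitT_eq_windowHitTime hφ hSj' ht₀η (hVgood y hy).1 (hVgood y hy).2.1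
  have hhitMap : EqOn (hitMap φ Sj') (fun y => φ (s y) y) V := fun y hy => by
    simp only [hitMap, hhitT hy]
  have hs : ContinuousOn s V := (hcsj'.continuousOn_windowHitTime_preimage_interior hφ hSj'
    t₀).mono fun y hy => (hVgood y hy).1
  refine ⟨V, hxV, hVS, hVopen, fun z hz => ⟨(hVcl hz).1.2, (hVcl hz).2⟩, hs.congr hhitT,
    fun y hy => ?_, fun A hAV hA => ?_,
    (hcsi'.injOn_map_of_abs_sub_le hφ hVS fun y₁ hy₁ y₂ hy₂ => ?_).congr hhitMap.symm,
    (hφ.continuousOn_map_of_continuousOn hs).congr hhitMap⟩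
  · rw [hhitT hy, hhitMap hy]
    exact ⟨(hVgood y hy).2.1, by linarith [(hsV y hy).1.2, hcsj'.1], (hsV y hy).2⟩
  · rw [(hhitMap.mono hAV).image_eq]
    exact hcsi'.isOpen_image_map_windowHitTime hcsj' hφ hSi' hSj' (hAV.trans hVS) hA
      (fun y hy => (hVgood y (hAV hy)).1) fun y hy => (hVgood y (hAV hy)).2.2
  · obtain ⟨⟨h₁, h₁'⟩, -⟩ := hsV y₁ hy₁
    obtain ⟨⟨h₂, h₂'⟩, -⟩ := hsV y₂ hy₂
    exact abs_le.mpr ⟨by linarith, by linarith⟩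

/-- Around any point of `D_{i,j}` there is a relatively open neighborhood `V` in `Sᵢ'`,
with closure inside `Int^Φ(Sᵢ')`, on which `t'_{i,j}` is continuous and `≤ 2η`, and on
which `T'_{i,j}` is an open map into `Sⱼ'` and a homeomorphism onto its image. -/
theorem exists_nbhd_hitMap_homeo
    {X : Type*} [MetricSpace X] [CompactSpace X]
    (φ : ℝ → X → X) (hφ : IsFlow X φ) (η : ℝ)
    (Si Sj Si' Sj' : Set X)
    (hSi : IsClosed Si) (hSj : IsClosed Sj) (hSi' : IsClosed Si') (hSj' : IsClosed Sj')
    (hcsi : IsCrossSection φ η Si) (hcsj : IsCrossSection φ η Sj)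
    (hcsi' : IsCrossSection φ η Si') (hcsj' : IsCrossSection φ η Sj')
    (hii' : Si ⊆ flowInterior φ η Si') (hjj' : Sj ⊆ flowInterior φ η Sj') :
    ∀ x ∈ Dij φ Si Sj η,
      ∃ V : Set X, x ∈ V ∧ V ⊆ Si' ∧
        IsOpen {y : Si' | (y : X) ∈ V} ∧
        closure V ⊆ flowInterior φ η Si' ∧
        ContinuousOn (hitT φ Sj') V ∧
        (∀ y ∈ V, 0 < hitT φ Sj' y ∧ hitT φ Sj' y ≤ 2 * η ∧ hitMap φ Sj' y ∈ Sj') ∧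
        (∀ A : Set X, A ⊆ V → IsOpen {y : Si' | (y : X) ∈ A} →
          IsOpen {y : Sj' | (y : X) ∈ hitMap φ Sj' '' A}) ∧
        Set.InjOn (hitMap φ Sj') V ∧ ContinuousOn (hitMap φ Sj') V :=
  exists_nbhd_hitMap_homeo_general φ hφ η Si Sj Si' Sj' hSi' hSj' hcsi' hcsj' hii' hjj'
end
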